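/- Effective dimension is not increased by calming (linear case). Let A be a q×p matrix, G² (p×p) and Γ² (q×q) symmetric positive definite, σ > 0 and λ = σ⁻². Let 𝔍_G be the symmetric block matrix with ff-block G² + λAᵀA, gg-block Γ² + (σ⁻²+λ)I_q and off-diagonal blocks −λAᵀ, −λA, and let 𝔍 be the same matrix with G² and Γ² replaced by zero. Then tr(𝔍_G⁻¹𝔍) ≤ 2·tr((G² + σ⁻²AᵀA)⁻¹ σ⁻²AᵀA) + 2·tr(((σ⁻²+λ)⁻¹Γ² + I_q)⁻¹). -/

import Mathlib

open MeasureTheory Matrix Real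

noncomputable section

namespace Calming

/-- Euclidean norm of a finitely indexed real vector. -/
def enorm {n : Type*} [Fintype n] (v : n → ℝ) : ℝ := Real.sqrt (∑ i, (v i) ^ 2)

/-- Operator (spectral) norm of a square real matrix. -/
def opNorm {n : Type*} [Fintype n] [DecidableEq n] (B : Matrix n n ℝ) : ℝ :=
  ‖Matrix.toEuclideanCLM (𝕜 := ℝ) B‖

/-- The quantile function `z(B,x) = √(tr B) + √(2‖B‖x)`. -/
def zq {n : Type*} [Fintype n] [DecidableEq n] (B : Matrix n n ℝ) (x : ℝ) : ℝ :=
  Real.sqrt B.trace + Real.sqrt (2 * opNorm B * x)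

open Classical in
/-- Positive semidefinite square root of a matrix (junk value `0` otherwise). -/
def matSqrt {n : Type*} [Fintype n] [DecidableEq n] (B : Matrix n n ℝ) : Matrix n n ℝ :=
  if h : B.PosSemidef then h.1.eigenvectorUnitary.1 * diagonal (Real.sqrt ∘ h.1.eigenvalues) *
    (star h.1.eigenvectorUnitary : Matrix n n ℝ) else 0

/-- Loewner (positive semidefinite) order: `B ≤ C`. -/
def loewnerLE {n : Type*} [Fintype n] (B C : Matrix n n ℝ) : Prop := (C - B).PosSemidef

/-- `D` is the positive semidefinite square root of `B`. -/
def IsSqrtOf {n : Type*} [Fintype n] (D B : Matrix n n ℝ) : Prop :=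
  D.PosSemidef ∧ D * D = B

/-- `Δ(B, B̆) = ‖B^{-1/2} B̆ B^{-1/2} - I‖`. -/
def DeltaM {n : Type*} [Fintype n] [DecidableEq n] (B C : Matrix n n ℝ) : ℝ :=
  opNorm (matSqrt B⁻¹ * C * matSqrt B⁻¹ - 1)

/-- Centered Gaussian measure with covariance `S` (defined through its density). -/
def gaussianCov {n : Type*} [Fintype n] [DecidableEq n] (S : Matrix n n ℝ) :
    Measure (n → ℝ) :=
  (∫⁻ x, ENNReal.ofReal (Real.exp (-(x ⬝ᵥ S⁻¹.mulVec x) / 2)))⁻¹ •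
    (volume.withDensity fun x => ENNReal.ofReal (Real.exp (-(x ⬝ᵥ S⁻¹.mulVec x) / 2)))

/-- Measure with density proportional to `exp (L υ) · 1_S(υ)`. -/
def posterior {V : Type*} [MeasureSpace V] (L : V → ℝ) (S : Set V) : Measure V :=
  (∫⁻ x, S.indicator (fun y => ENNReal.ofReal (Real.exp (L y))) x)⁻¹ •
    volume.withDensity (S.indicator fun y => ENNReal.ofReal (Real.exp (L y)))

variable {p q : ℕ}

/-- `f`-component of the total parameter. -/
def fpart (υ : (Fin p ⊕ Fin q) → ℝ) : Fin p → ℝ := fun i => υ (Sum.inl i)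

/-- `g`-component of the total parameter. -/
def gpart (υ : (Fin p ⊕ Fin q) → ℝ) : Fin q → ℝ := fun j => υ (Sum.inr j)

/-- The penalized log-likelihood of the calming approach. -/
def LG (A : (Fin p → ℝ) → (Fin q → ℝ)) (Y : Fin q → ℝ) (σ lam : ℝ)
    (G : Matrix (Fin p) (Fin p) ℝ) (Γm : Matrix (Fin q) (Fin q) ℝ)
    (f0 : Fin p → ℝ) (g0 : Fin q → ℝ) (υ : (Fin p ⊕ Fin q) → ℝ) : ℝ :=
  -(enorm (Y - gpart υ) ^ 2) / (2 * σ ^ 2) - lam / 2 * enorm (gpart υ - A (fpart υ)) ^ 2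
    - enorm (G.mulVec (fpart υ - f0)) ^ 2 / 2 - enorm (Γm.mulVec (gpart υ - g0)) ^ 2 / 2

/-- `m`-th directional (Gateaux) derivative of the structural penalty `‖g - A(f)‖²`. -/
def sDeriv (A : (Fin p → ℝ) → (Fin q → ℝ)) (m : ℕ) (υ u : (Fin p ⊕ Fin q) → ℝ) : ℝ :=
  iteratedDeriv m (fun t : ℝ => enorm (gpart (υ + t • u) - A (fpart (υ + t • u))) ^ 2) 0

/-- `δ_{3,G}(r)`. -/
def delta3G (A : (Fin p → ℝ) → (Fin q → ℝ))
    (DG : Matrix (Fin p ⊕ Fin q) (Fin p ⊕ Fin q) ℝ) (υG : (Fin p ⊕ Fin q) → ℝ) (r : ℝ) : ℝ :=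
  sSup {v | ∃ υ u, enorm (DG.mulVec (υ - υG)) ≤ r ∧ enorm (DG.mulVec u) ≤ r ∧
    v = |sDeriv A 3 υ u|}

/-- `δ_m(r₀)`, `m = 3,4`, where `Dm υ = 𝔍(υ)^{1/2}`. -/
def deltam (A : (Fin p → ℝ) → (Fin q → ℝ))
    (Dm : ((Fin p ⊕ Fin q) → ℝ) → Matrix (Fin p ⊕ Fin q) (Fin p ⊕ Fin q) ℝ)
    (Υ : Set ((Fin p ⊕ Fin q) → ℝ)) (m : ℕ) (r : ℝ) : ℝ :=
  sSup {v | ∃ υ ∈ Υ, ∃ u, enorm ((Dm υ).mulVec u) ≤ r ∧ v = |sDeriv A m υ u|}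

/-- `J` is the (directional) negative Hessian of `F`. -/
def IsDirectionalHessian (F : ((Fin p ⊕ Fin q) → ℝ) → ℝ)
    (J : ((Fin p ⊕ Fin q) → ℝ) → Matrix (Fin p ⊕ Fin q) (Fin p ⊕ Fin q) ℝ) : Prop :=
  ∀ υ u, iteratedDeriv 2 (fun t : ℝ => F (υ + t • u)) 0 = -(u ⬝ᵥ (J υ).mulVec u)

/-- The ratio `ρ(r₀)` of posterior-type masses outside/inside the local ellipsoid. -/
def rhoVal (L : ((Fin p ⊕ Fin q) → ℝ) → ℝ) (υt : (Fin p ⊕ Fin q) → ℝ)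
    (Dt : Matrix (Fin p ⊕ Fin q) (Fin p ⊕ Fin q) ℝ) (r0 : ℝ) : ℝ :=
  ((∫⁻ u in {u | r0 < enorm (Dt.mulVec u)}, ENNReal.ofReal (Real.exp (L (υt + u)))) /
    (∫⁻ u in {u | enorm (Dt.mulVec u) ≤ r0}, ENNReal.ofReal (Real.exp (L (υt + u))))).toReal

end Calming

/-!
Write `𝔍_G = D + 𝔍` with `D = diag(G², Γ²)`, so that `tr(𝔍_G⁻¹𝔍) = p + q - tr(𝔍_G⁻¹D)`. For a
positive definite block matrix `M` and `T = diag(M₁₁⁻¹, M₂₂⁻¹)`, expanding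
`0 ≤ tr((M⁻¹ - T) M (M⁻¹ - T) D)` gives `tr(M⁻¹D) ≥ tr(M₁₁⁻¹D₁) + tr(M₂₂⁻¹D₂)`. Hence the effective
dimension of `𝔍_G` is at most the sum of the effective dimensions of its diagonal blocks
`G² + σ⁻²AᵀA` and `Γ² + (σ⁻² + λ)I`, which are the two traces on the right; both are nonnegative,
so the factor `2` costs nothing.
-/

open scoped MatrixOrder ComplexOrder

namespace Matrix

variable {m n 𝕜 : Type*} [Fintype m] [Fintype n] [DecidableEq m] [DecidableEq n] [RCLike 𝕜]

omit [DecidableEq m] [DecidableEq n] in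
theorem trace_fromBlocks (A : Matrix m m 𝕜) (B : Matrix m n 𝕜) (C : Matrix n m 𝕜)
    (D : Matrix n n 𝕜) : (fromBlocks A B C D).trace = A.trace + D.trace := by
  simp [trace, Fintype.sum_sum_type]

theorem PosSemidef.trace_mul_nonneg {A B : Matrix n n 𝕜} (hA : A.PosSemidef)
    (hB : B.PosSemidef) : 0 ≤ (A * B).trace := by
  obtain ⟨X, rfl⟩ := CStarAlgebra.nonneg_iff_eq_star_mul_self.mp hB.nonneg
  rw [← Matrix.mul_assoc, trace_mul_comm, ← Matrix.mul_assoc, star_eq_conjTranspose]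
  exact (hA.mul_mul_conjTranspose_same X).trace_nonneg

theorem PosSemidef.fromBlocks_zero {A : Matrix m m 𝕜} {D : Matrix n n 𝕜} (hA : A.PosSemidef)
    (hD : D.PosSemidef) : (fromBlocks A 0 0 D).PosSemidef := by
  obtain ⟨X, rfl⟩ := CStarAlgebra.nonneg_iff_eq_star_mul_self.mp hA.nonneg
  obtain ⟨Y, rfl⟩ := CStarAlgebra.nonneg_iff_eq_star_mul_self.mp hD.nonneg
  simpa [fromBlocks_conjTranspose, fromBlocks_multiply, star_eq_conjTranspose] using
    posSemidef_conjTranspose_mul_self (fromBlocks X 0 0 Y)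

theorem PosDef.fromBlocks_zero {A : Matrix m m 𝕜} {D : Matrix n n 𝕜} (hA : A.PosDef)
    (hD : D.PosDef) : (fromBlocks A 0 0 D).PosDef := by
  rw [(hA.posSemidef.fromBlocks_zero hD.posSemidef).posDef_iff_det_ne_zero, det_fromBlocks_zero₂₁]
  exact mul_ne_zero hA.det_pos.ne' hD.det_pos.ne'

omit [Fintype n] [DecidableEq n] in
theorem conjTranspose_fromCols_neg_one_mul_self (A : Matrix m n 𝕜) :
    (fromCols A (-1))ᴴ * fromCols A (-1) = fromBlocks (Aᴴ * A) (-Aᴴ) (-A) 1 := by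
  simp [conjTranspose_fromCols_eq_fromRows_conjTranspose]

theorem inv_smul_add_one {X : Matrix n n 𝕜} {c : 𝕜} (hc : c ≠ 0) (hX : IsUnit (X + c • 1)) :
    (c⁻¹ • X + 1)⁻¹ = (X + c • 1)⁻¹ * c • 1 := by
  refine inv_eq_left_inv ?_
  rw [Matrix.mul_smul, Matrix.mul_one, Matrix.smul_mul, ← Matrix.mul_smul, smul_add, smul_smul,
    mul_inv_cancel₀ hc, one_smul, nonsing_inv_mul _ ((isUnit_iff_isUnit_det _).mp hX)]

theorem trace_inv_add_mul_right {X Y : Matrix n n 𝕜} (h : IsUnit (X + Y)) :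
    ((X + Y)⁻¹ * Y).trace = Fintype.card n - ((X + Y)⁻¹ * X).trace := by
  rw [eq_sub_iff_add_eq, ← trace_add, ← Matrix.mul_add, add_comm Y,
    nonsing_inv_mul _ ((isUnit_iff_isUnit_det _).mp h), trace_one]

theorem PosDef.two_mul_trace_sub_le_trace_inv_mul {M D T : Matrix n n 𝕜} (hM : M.PosDef)
    (hD : D.PosSemidef) (hT : T.IsHermitian) :
    2 * (T * D).trace - (T * M * T * D).trace ≤ (M⁻¹ * D).trace := by
  have hMM : M⁻¹ * M = 1 := nonsing_inv_mul M ((isUnit_iff_isUnit_det M).mp hM.isUnit)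
  have hMM' : M * M⁻¹ = 1 := mul_nonsing_inv M ((isUnit_iff_isUnit_det M).mp hM.isUnit)
  have hR := (hM.posSemidef.conjTranspose_mul_mul_same (M⁻¹ - T)).trace_mul_nonneg hD
  rw [conjTranspose_sub, hM.inv.isHermitian.eq, hT.eq] at hR
  rw [← sub_nonneg]
  convert hR using 1
  simp only [Matrix.sub_mul, Matrix.mul_sub, hMM, Matrix.mul_assoc, hMM', Matrix.one_mul,
    Matrix.mul_one, trace_sub, two_mul]
  ring

theorem PosDef.le_trace_inv_mul_fromBlocks {A : Matrix m m 𝕜} {B : Matrix m n 𝕜}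
    {C : Matrix n m 𝕜} {D : Matrix n n 𝕜} {D₁ : Matrix m m 𝕜} {D₂ : Matrix n n 𝕜}
    (hM : (fromBlocks A B C D).PosDef) (hD₁ : D₁.PosSemidef) (hD₂ : D₂.PosSemidef) :
    (A⁻¹ * D₁).trace + (D⁻¹ * D₂).trace ≤
      ((fromBlocks A B C D)⁻¹ * fromBlocks D₁ 0 0 D₂).trace := by
  have hA : A.PosDef := hM.submatrix Sum.inl_injective
  have hD : D.PosDef := hM.submatrix Sum.inr_injective
  have hAA : A⁻¹ * A = 1 := nonsing_inv_mul A ((isUnit_iff_isUnit_det A).mp hA.isUnit)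
  have hDD : D⁻¹ * D = 1 := nonsing_inv_mul D ((isUnit_iff_isUnit_det D).mp hD.isUnit)
  have hT : (fromBlocks A⁻¹ 0 0 D⁻¹).IsHermitian :=
    .fromBlocks hA.inv.isHermitian (by simp) hD.inv.isHermitian
  have key := hM.two_mul_trace_sub_le_trace_inv_mul (hD₁.fromBlocks_zero hD₂) hT
  simp only [fromBlocks_multiply, Matrix.mul_zero, Matrix.zero_mul, add_zero, zero_add,
    Matrix.mul_assoc, trace_fromBlocks] at key
  simp only [← Matrix.mul_assoc, hAA, hDD, Matrix.one_mul] at key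
  rwa [two_mul, add_sub_cancel_right] at key

theorem PosDef.trace_inv_mul_fromBlocks_le {D₁ J₁₁ : Matrix m m 𝕜} {J₁₂ : Matrix m n 𝕜}
    {J₂₁ : Matrix n m 𝕜} {D₂ J₂₂ : Matrix n n 𝕜} (hD₁ : D₁.PosSemidef) (hD₂ : D₂.PosSemidef)
    (hM : (fromBlocks (D₁ + J₁₁) J₁₂ J₂₁ (D₂ + J₂₂)).PosDef) :
    ((fromBlocks (D₁ + J₁₁) J₁₂ J₂₁ (D₂ + J₂₂))⁻¹ * fromBlocks J₁₁ J₁₂ J₂₁ J₂₂).trace ≤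
      ((D₁ + J₁₁)⁻¹ * J₁₁).trace + ((D₂ + J₂₂)⁻¹ * J₂₂).trace := by
  have hA : (D₁ + J₁₁).PosDef := hM.submatrix Sum.inl_injective
  have hD : (D₂ + J₂₂).PosDef := hM.submatrix Sum.inr_injective
  have key := hM.le_trace_inv_mul_fromBlocks hD₁ hD₂
  have hsplit : fromBlocks (D₁ + J₁₁) J₁₂ J₂₁ (D₂ + J₂₂) =
      fromBlocks D₁ 0 0 D₂ + fromBlocks J₁₁ J₁₂ J₂₁ J₂₂ := by
    simp [fromBlocks_add]
  rw [hsplit] at hM key ⊢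
  rw [trace_inv_add_mul_right hM.isUnit, trace_inv_add_mul_right hA.isUnit,
    trace_inv_add_mul_right hD.isUnit, Fintype.card_sum, Nat.cast_add, ← add_sub_add_comm]
  exact sub_le_sub_left key _

end Matrix

namespace Calming

/-- effective dimension is not increased by calming (linear case). -/
theorem effective_dimension_calming {p q : ℕ} (Am : Matrix (Fin q) (Fin p) ℝ)
    (G2 : Matrix (Fin p) (Fin p) ℝ) (hG2 : G2.PosDef)
    (Γ2 : Matrix (Fin q) (Fin q) ℝ) (hΓ2 : Γ2.PosDef)
    (σ lam : ℝ) (hσ : 0 < σ) (hlam : lam = (σ ^ 2)⁻¹)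
    (JGm Jm : Matrix (Fin p ⊕ Fin q) (Fin p ⊕ Fin q) ℝ)
    (hJGm : JGm = Matrix.fromBlocks (G2 + lam • (Amᵀ * Am)) (-lam • Amᵀ) (-lam • Am)
      (Γ2 + ((σ ^ 2)⁻¹ + lam) • 1))
    (hJm : Jm = Matrix.fromBlocks (lam • (Amᵀ * Am)) (-lam • Amᵀ) (-lam • Am)
      (((σ ^ 2)⁻¹ + lam) • 1)) :
    (JGm⁻¹ * Jm).trace ≤
      2 * ((G2 + (σ ^ 2)⁻¹ • (Amᵀ * Am))⁻¹ * ((σ ^ 2)⁻¹ • (Amᵀ * Am))).trace +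
        2 * ((((σ ^ 2)⁻¹ + lam)⁻¹ • Γ2 + 1)⁻¹).trace := by
  subst hlam hJGm hJm
  set l : ℝ := (σ ^ 2)⁻¹
  have hl : 0 < l := by positivity
  have hB : (l • (Amᵀ * Am)).PosSemidef := by
    simpa using (posSemidef_conjTranspose_mul_self Am).smul hl.le
  have hH : (Γ2 + (l + l) • 1).PosDef := hΓ2.add_posSemidef (PosSemidef.one.smul (by positivity))
  have hJG :
      (fromBlocks (G2 + l • (Amᵀ * Am)) (-l • Amᵀ) (-l • Am) (Γ2 + (l + l) • 1)).PosDef := by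
    have hsplit : fromBlocks (G2 + l • (Amᵀ * Am)) (-l • Amᵀ) (-l • Am) (Γ2 + (l + l) • 1) =
        fromBlocks G2 0 0 (Γ2 + l • 1) + l • ((fromCols Am (-1))ᴴ * fromCols Am (-1)) := by
      rw [conjTranspose_fromCols_neg_one_mul_self]
      simp [fromBlocks_smul, fromBlocks_add, add_smul, add_assoc]
    rw [hsplit]
    exact (hG2.fromBlocks_zero (hΓ2.add_posSemidef (PosSemidef.one.smul hl.le))).add_posSemidef
      ((posSemidef_conjTranspose_mul_self _).smul hl.le)
  have hdim := hJG.trace_inv_mul_fromBlocks_le hG2.posSemidef hΓ2.posSemidef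
  have hf := (hG2.add_posSemidef hB).inv.posSemidef.trace_mul_nonneg hB
  have hg := hH.inv.posSemidef.trace_mul_nonneg (PosSemidef.one.smul (by positivity : 0 ≤ l + l))
  rw [inv_smul_add_one (by positivity) hH.isUnit]
  linarith

end Calming
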